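/- Let V be a finite nonempty type, K : List V → PMF V the target autoregressive next-token kernel, u : List V → ℝ a utility function, T : ℕ a generation horizon, and comp, U the horizon-indexed completion distribution and expected utility defined from K and u. Let K' : List V → PMF V be a decoding kernel such that for every prefix y of length t < T there exist α_y ∈ [0,1] and ν_y : PMF V supported on the non-pivot tokens {a : V | U (T − t − 1) (y ++ [a]) ≥ U (T − t) y} with K' y = α_y • ν_y + (1 − α_y) • K y. Let comp' be the horizon-indexed completion distribution defined from K' in the same way as comp is from K. Then E_{z ~ comp' T []}[u z] ≥ E_{z ~ comp T []}[u z]; i.e., a decoder that, whenever it deviates from the target kernel, only ever accepts non-pivot tokens (a pivot classifier with 100% recall) is 0-utility preserving: its expected utility is at least that of the target model. -/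

import Mathlib

open scoped ENNReal

/-- Horizon-`n` completion distribution: extend prefix `y` with `n` tokens sampled
successively from the autoregressive kernel `K`. -/
noncomputable def comp {V : Type*} (K : List V → PMF V) : ℕ → List V → PMF (List V)
  | 0, y => PMF.pure y
  | n + 1, y => (K y).bind fun a => comp K n (y ++ [a])

/-- Expected utility of prefix `y` at horizon `n`:
`U n y = E_{z ~ comp n y}[u z]`. -/
noncomputable def expUtil {V : Type*} (K : List V → PMF V) (u : List V → ℝ)
    (n : ℕ) (y : List V) : ℝ :=
  ∑' z : List V, (comp K n y z).toReal * u z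

lemma comp_support_finite {V : Type*} [Fintype V] (K : List V → PMF V) :
    ∀ (n : ℕ) (y : List V), (comp K n y).support.Finite
  | 0, y => by simp [comp]
  | n + 1, y => by
      rw [comp, PMF.support_bind]
      exact (Set.toFinite (K y).support).biUnion
        fun a _ => comp_support_finite K n (y ++ [a])

lemma summable_util {V : Type*} [Fintype V] (K : List V → PMF V) (u : List V → ℝ)
    (n : ℕ) (y : List V) :
    Summable fun z => (comp K n y z).toReal * u z := by
  apply summable_of_ne_finset_zero (s := (comp_support_finite K n y).toFinset)
  intro z hz
  have hz' : comp K n y z = 0 := by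
    by_contra hne
    exact hz ((comp_support_finite K n y).mem_toFinset.mpr hne)
  simp [hz']

lemma expUtil_zero {V : Type*} (K : List V → PMF V) (u : List V → ℝ) (y : List V) :
    expUtil K u 0 y = u y := by
  unfold expUtil
  rw [tsum_eq_single y]
  · simp [comp]
  · intro z hz
    simp [comp, PMF.pure_apply, hz]

lemma expUtil_succ {V : Type*} [Fintype V] (K : List V → PMF V) (u : List V → ℝ)
    (n : ℕ) (y : List V) :
    expUtil K u (n + 1) y = ∑ a, (K y a).toReal * expUtil K u n (y ++ [a]) := by
  unfold expUtil
  have h1 : ∀ z, (comp K (n + 1) y z).toReal * u z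
      = ∑ a, (K y a).toReal * ((comp K n (y ++ [a]) z).toReal * u z) := by
    intro z
    rw [comp, PMF.bind_apply, tsum_fintype, ENNReal.toReal_sum, Finset.sum_mul]
    · refine Finset.sum_congr rfl fun a _ => ?_
      rw [ENNReal.toReal_mul]; ring
    · intro a _
      exact ENNReal.mul_ne_top (PMF.apply_ne_top _ _) (PMF.apply_ne_top _ _)
  simp_rw [h1]
  rw [Summable.tsum_finsetSum fun a _ => (summable_util K u n (y ++ [a])).mul_left _]
  exact Finset.sum_congr rfl fun a _ => tsum_mul_left

lemma sum_toReal_eq_one {V : Type*} [Fintype V] (p : PMF V) :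
    ∑ a, (p a).toReal = 1 := by
  have := p.tsum_coe
  rw [tsum_fintype] at this
  rw [← ENNReal.toReal_sum fun a _ => PMF.apply_ne_top p a, this, ENNReal.toReal_one]

/-- A decoder `K'` that, whenever it deviates from the target kernel `K`, only
accepts non-pivot tokens (pivot classifier with 100% recall) is `0`-utility
preserving over a horizon `T`: its expected utility is at least that of the
target model. -/
theorem pivot_aware_decoding_preserves_utility {V : Type*} [Fintype V] [Nonempty V]
    (K K' : List V → PMF V) (u : List V → ℝ) (T : ℕ)
    (h : ∀ y : List V, y.length < T →
      ∃ (α : ℝ≥0∞) (ν : PMF V), α ≤ 1 ∧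
        ν.support ⊆ {a : V |
          expUtil K u (T - y.length - 1) (y ++ [a]) ≥ expUtil K u (T - y.length) y} ∧
        ∀ a, K' y a = α * ν a + (1 - α) * K y a) :
    expUtil K' u T [] ≥ expUtil K u T [] := by
  suffices key : ∀ n (y : List V), y.length + n = T →
      expUtil K u n y ≤ expUtil K' u n y by
    exact key T [] (by simp)
  intro n
  induction n with
  | zero =>
    intro y _
    rw [expUtil_zero, expUtil_zero]
  | succ n ih =>
    intro y hy
    have hlt : y.length < T := by omega
    obtain ⟨α, ν, hα, hsupp, hK'⟩ := h y hlt
    have hTn : T - y.length = n + 1 := by omega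
    have hTn1 : T - y.length - 1 = n := by omega
    rw [hTn] at hsupp
    simp only [Nat.add_sub_cancel] at hsupp
    have hαne : α ≠ ⊤ := ne_top_of_le_ne_top ENNReal.one_ne_top hα
    rw [expUtil_succ, expUtil_succ]
    have step1 : ∑ a, (K' y a).toReal * expUtil K u n (y ++ [a])
        ≤ ∑ a, (K' y a).toReal * expUtil K' u n (y ++ [a]) := by
      refine Finset.sum_le_sum fun a _ => ?_
      exact mul_le_mul_of_nonneg_left (ih (y ++ [a]) (by simp at hy ⊢; omega))
        ENNReal.toReal_nonneg
    refine le_trans ?_ step1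
    -- rewrite K' using the mixture
    have hdecomp : ∀ a, (K' y a).toReal
        = α.toReal * (ν a).toReal + (1 - α).toReal * (K y a).toReal := by
      intro a
      rw [hK' a, ENNReal.toReal_add, ENNReal.toReal_mul, ENNReal.toReal_mul]
      · exact ENNReal.mul_ne_top hαne (PMF.apply_ne_top _ _)
      · exact ENNReal.mul_ne_top (by simp) (PMF.apply_ne_top _ _)
    simp_rw [hdecomp, add_mul, Finset.sum_add_distrib, mul_assoc, ← Finset.mul_sum]
    set SK := ∑ a, (K y a).toReal * expUtil K u n (y ++ [a]) with hSK
    have hSν : SK ≤ ∑ a, (ν a).toReal * expUtil K u n (y ++ [a]) := by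
      calc SK = ∑ a, (ν a).toReal * SK := by
            rw [← Finset.sum_mul, sum_toReal_eq_one, one_mul]
        _ ≤ ∑ a, (ν a).toReal * expUtil K u n (y ++ [a]) := by
            refine Finset.sum_le_sum fun a _ => ?_
            rcases eq_or_ne (ν a) 0 with h0 | h0
            · simp [h0]
            · refine mul_le_mul_of_nonneg_left ?_ ENNReal.toReal_nonneg
              have := hsupp h0
              simp only [Set.mem_setOf_eq] at this
              rwa [expUtil_succ, ← hSK] at this
    have hαsub : (1 - α).toReal = 1 - α.toReal := by
      rw [ENNReal.toReal_sub_of_le hα ENNReal.one_ne_top, ENNReal.toReal_one]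
    calc SK = α.toReal * SK + (1 - α.toReal) * SK := by ring
      _ ≤ α.toReal * (∑ a, (ν a).toReal * expUtil K u n (y ++ [a]))
          + (1 - α.toReal) * SK := by
          exact add_le_add_left (mul_le_mul_of_nonneg_left hSν ENNReal.toReal_nonneg) _
      _ = α.toReal * (∑ a, (ν a).toReal * expUtil K u n (y ++ [a]))
          + (1 - α).toReal * SK := by rw [hαsub]
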